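/- Let Ω_{SR₁}, Ω_{R₁D}, Ω_{SR₂}, Ω_{R₂D} > 0 and 𝓕_{SR₁}, 𝓕_{R₁D}, 𝓕_{SR₂}, 𝓕_{R₂D} > 0, and set Ωᵢ = Ω_{SRᵢ}Ω_{RᵢD}/(Ω_{SRᵢ}+Ω_{RᵢD}) for i ∈ {1,2}. Let f_{aᵢ}(x) = 2x·((Ω_{SRᵢ}+Ω_{RᵢD})/(Ω_{SRᵢ}Ω_{RᵢD}))·exp(−x²(Ω_{SRᵢ}+Ω_{RᵢD})/(Ω_{SRᵢ}Ω_{RᵢD})) for x ≥ 0, and let h be the four-component Gaussian-mixture density with mixture weights Ω_{SR₁}Ω_{SR₂}, Ω_{R₁D}Ω_{SR₂}, Ω_{R₂D}Ω_{SR₁}, Ω_{R₁D}Ω_{R₂D} (each divided by (Ω_{SR₁}+Ω_{R₁D})(Ω_{SR₂}+Ω_{R₂D})) and corresponding variances π²(Ω_{R₁D}𝓕_{R₁D}²+Ω_{R₂D}𝓕_{R₂D}²), π²(Ω_{SR₁}𝓕_{SR₁}²+Ω_{R₂D}𝓕_{R₂D}²), π²(Ω_{SR₂}𝓕_{SR₂}²+Ω_{R₁D}𝓕_{R₁D}²),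 π²(Ω_{SR₁}𝓕_{SR₁}²+Ω_{SR₂}𝓕_{SR₂}²). Then the relay switching rate of two-relay opportunistic relaying, SR_OR = 2·(∫₀^∞ f_{a₁}(x) f_{a₂}(x) dx)·(∫₀^∞ x·h(x) dx), equals (π√(2Ω₁Ω₂)/((Ω₁+Ω₂)^{3/2}(Ω_{SR₁}+Ω_{R₁D})(Ω_{SR₂}+Ω_{R₂D})))·[ Ω_{SR₁}Ω_{SR₂}√(Ω_{R₁D}𝓕_{R₁D}²+Ω_{R₂D}𝓕_{R₂D}²) + Ω_{R₁D}Ω_{SR₂}√(Ω_{SR₁}𝓕_{SR₁}²+Ω_{R₂D}𝓕_{R₂D}²) + Ω_{R₂D}Ω_{SR₁}√(Ω_{SR₂}𝓕_{SR₂}²+Ω_{R₁D}𝓕_{R₁D}²) + Ω_{R₁D}Ω_{R₂D}√(Ω_{SR₁}𝓕_{SR₁}²+Ω_{SR₂}𝓕_{SR₂}²) ]. -/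

import Mathlib

/-!
Both rate parameters in `f_{aᵢ}` equal `1 / Ωᵢ`, so `f_{aᵢ}` is the Rayleigh density of mean
square `Ωᵢ`, and `f_{a₁} f_{a₂} = 4 x² / (Ω₁ Ω₂) · exp (-(1/Ω₁ + 1/Ω₂) x²)`. Its integral over the
half-line is the Gamma integral `∫₀^∞ x² e^{-b x²} dx = √π / (4 b^{3/2})`, which gives
`f_Z(0) = √π √(Ω₁ Ω₂) / (Ω₁ + Ω₂)^{3/2}`. The density `h` is a mixture of centred Gaussians, and a
centred Gaussian of variance `v` has half-line first moment `√v / √(2π)`; with `v = π² S` this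
produces the factors `π √S`.
-/

open MeasureTheory Real Set ProbabilityTheory
open scoped NNReal

theorem integral_Ioi_pow_mul_exp_neg_mul_sq (n : ℕ) {b : ℝ} (hb : 0 < b) :
    ∫ x in Ioi (0 : ℝ), x ^ n * exp (-b * x ^ 2) =
      b ^ (-(n + 1) / 2 : ℝ) / 2 * Gamma ((n + 1) / 2) := by
  have h := integral_rpow_mul_exp_neg_mul_rpow two_pos
    (neg_one_lt_zero.trans_le (Nat.cast_nonneg n)) hb
  norm_cast at h
  rw [h]
  push_cast
  ring

theorem integral_Ioi_mul_exp_neg_mul_sq {b : ℝ} (hb : 0 < b) :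
    ∫ x in Ioi (0 : ℝ), x * exp (-b * x ^ 2) = (2 * b)⁻¹ := by
  have h := integral_Ioi_pow_mul_exp_neg_mul_sq 1 hb
  simp only [pow_one, Nat.cast_one] at h
  rw [show (-(1 + 1) / 2 : ℝ) = -1 by norm_num, rpow_neg_one,
    show (1 + 1) / 2 = (1 : ℝ) by norm_num, Gamma_one] at h
  rw [h]
  ring

theorem integral_Ioi_sq_mul_exp_neg_mul_sq {b : ℝ} (hb : 0 < b) :
    ∫ x in Ioi (0 : ℝ), x ^ 2 * exp (-b * x ^ 2) = √π / (4 * b ^ (3 / 2 : ℝ)) := by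
  rw [integral_Ioi_pow_mul_exp_neg_mul_sq 2 hb,
    show ((2 : ℕ) + 1) / 2 = (1 / 2 : ℝ) + 1 by norm_num, Gamma_add_one one_half_pos.ne',
    Gamma_one_half_eq,
    show (-((2 : ℕ) + 1) / 2 : ℝ) = -(3 / 2) by norm_num, rpow_neg hb.le]
  ring

theorem rpow_three_halves {x : ℝ} (hx : 0 ≤ x) : x ^ (3 / 2 : ℝ) = x * √x := by
  rw [show (3 / 2 : ℝ) = 1 + 1 / 2 by norm_num, rpow_add' hx (by norm_num), rpow_one,
    sqrt_eq_rpow]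

noncomputable def rayleighPDF (Ω x : ℝ) : ℝ := 2 * x / Ω * exp (-x ^ 2 / Ω)

theorem rayleighPDF_mul_div_add (a b : ℝ) :
    rayleighPDF (a * b / (a + b)) =
      fun x ↦ 2 * x * ((a + b) / (a * b)) * exp (-x ^ 2 * (a + b) / (a * b)) := by
  ext x
  rw [rayleighPDF, div_div_eq_mul_div, div_div_eq_mul_div, mul_div_assoc (2 * x)]

theorem integral_Ioi_rayleighPDF_mul_rayleighPDF {Ω₁ Ω₂ : ℝ} (h₁ : 0 < Ω₁) (h₂ : 0 < Ω₂) :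
    ∫ x in Ioi (0 : ℝ), rayleighPDF Ω₁ x * rayleighPDF Ω₂ x =
      √π * √(Ω₁ * Ω₂) / (Ω₁ + Ω₂) ^ (3 / 2 : ℝ) := by
  have hb : Ω₁⁻¹ + Ω₂⁻¹ = (Ω₁ + Ω₂) / (Ω₁ * Ω₂) := by field_simp; ring
  have hprod (x : ℝ) : rayleighPDF Ω₁ x * rayleighPDF Ω₂ x =
      4 / (Ω₁ * Ω₂) * (x ^ 2 * exp (-(Ω₁⁻¹ + Ω₂⁻¹) * x ^ 2)) := by
    rw [rayleighPDF, rayleighPDF, neg_mul, add_mul, neg_add, exp_add]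
    field_simp
    ring
  simp_rw [hprod]
  rw [integral_const_mul, integral_Ioi_sq_mul_exp_neg_mul_sq (by positivity), hb,
    div_rpow (by positivity) (by positivity), rpow_three_halves (x := Ω₁ * Ω₂) (by positivity)]
  field_simp

theorem mul_gaussianPDFReal_zero (v : ℝ≥0) (x : ℝ) :
    x * gaussianPDFReal 0 v x = (√(2 * π * v))⁻¹ * (x * exp (-(2 * (v : ℝ))⁻¹ * x ^ 2)) := by
  simp only [gaussianPDFReal, sub_zero]
  ring_nf

theorem integrable_mul_gaussianPDFReal_zero (v : ℝ≥0) :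
    Integrable fun x ↦ x * gaussianPDFReal 0 v x := by
  rcases eq_or_ne v 0 with rfl | hv
  · simp
  simp_rw [mul_gaussianPDFReal_zero]
  exact (integrable_mul_exp_neg_mul_sq (by positivity)).const_mul _

theorem integral_Ioi_mul_gaussianPDFReal_zero (v : ℝ≥0) :
    ∫ x in Ioi (0 : ℝ), x * gaussianPDFReal 0 v x = √v / √(2 * π) := by
  rcases eq_or_ne v 0 with rfl | hv
  · simp
  simp_rw [mul_gaussianPDFReal_zero]
  rw [integral_const_mul, integral_Ioi_mul_exp_neg_mul_sq (by positivity),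
    sqrt_mul (by positivity)]
  have hs : √(v : ℝ) * √(v : ℝ) = v := mul_self_sqrt v.2
  field_simp
  linear_combination -hs

theorem gaussianPDFReal_zero_toNNReal (v x : ℝ) :
    gaussianPDFReal 0 v.toNNReal x = exp (-x ^ 2 / (2 * v)) / √(2 * π * v) := by
  rcases le_or_gt v 0 with hv | hv
  · rw [toNNReal_of_nonpos hv, gaussianPDFReal_zero_var, sqrt_eq_zero_of_nonpos
      (mul_nonpos_of_nonneg_of_nonpos (by positivity) hv), div_zero, Pi.zero_apply]
  · rw [gaussianPDFReal, coe_toNNReal _ hv.le, sub_zero, div_eq_inv_mul (exp _)]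


theorem sqrt_coe_toNNReal (r : ℝ) : √(r.toNNReal : ℝ) = √r := by
  rcases le_total r 0 with hr | hr
  · rw [toNNReal_of_nonpos hr, NNReal.coe_zero, sqrt_zero, sqrt_eq_zero_of_nonpos hr]
  · rw [coe_toNNReal _ hr]


theorem integral_Ioi_mul_sum_gaussianPDFReal_zero {ι : Type*} (s : Finset ι) (w : ι → ℝ)
    (v : ι → ℝ≥0) :
    ∫ x in Ioi (0 : ℝ), x * ∑ i ∈ s, w i * gaussianPDFReal 0 (v i) x =
      (∑ i ∈ s, w i * √(v i)) / √(2 * π) := by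
  simp_rw [Finset.mul_sum, mul_left_comm _ (w _)]
  rw [integral_finsetSum s fun i _ ↦
      ((integrable_mul_gaussianPDFReal_zero (v i)).const_mul (w i)).integrableOn,
    Finset.sum_div]
  refine Finset.sum_congr rfl fun i _ ↦ ?_
  rw [integral_const_mul, integral_Ioi_mul_gaussianPDFReal_zero, mul_div_assoc]

theorem relay_switching_rate_OR_two_relays_general
    (ΩSR₁ ΩR₁D ΩSR₂ ΩR₂D FSR₁ FR₁D FSR₂ FR₂D : ℝ)
    (hΩSR₁ : 0 < ΩSR₁) (hΩR₁D : 0 < ΩR₁D) (hΩSR₂ : 0 < ΩSR₂) (hΩR₂D : 0 < ΩR₂D)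
    (Ω₁ Ω₂ : ℝ)
    (hΩ₁ : Ω₁ = ΩSR₁ * ΩR₁D / (ΩSR₁ + ΩR₁D))
    (hΩ₂ : Ω₂ = ΩSR₂ * ΩR₂D / (ΩSR₂ + ΩR₂D))
    (fa₁ fa₂ h : ℝ → ℝ)
    (hfa₁ : fa₁ = fun x => 2 * x * ((ΩSR₁ + ΩR₁D) / (ΩSR₁ * ΩR₁D)) *
      Real.exp (-x ^ 2 * (ΩSR₁ + ΩR₁D) / (ΩSR₁ * ΩR₁D)))
    (hfa₂ : fa₂ = fun x => 2 * x * ((ΩSR₂ + ΩR₂D) / (ΩSR₂ * ΩR₂D)) *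
      Real.exp (-x ^ 2 * (ΩSR₂ + ΩR₂D) / (ΩSR₂ * ΩR₂D)))
    (hh : h = fun x =>
      (ΩSR₁ * ΩSR₂ / ((ΩSR₁ + ΩR₁D) * (ΩSR₂ + ΩR₂D))) *
        (Real.exp (-x ^ 2 / (2 * (π ^ 2 * (ΩR₁D * FR₁D ^ 2 + ΩR₂D * FR₂D ^ 2)))) /
          Real.sqrt (2 * π * (π ^ 2 * (ΩR₁D * FR₁D ^ 2 + ΩR₂D * FR₂D ^ 2)))) +
      (ΩR₁D * ΩSR₂ / ((ΩSR₁ + ΩR₁D) * (ΩSR₂ + ΩR₂D))) *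
        (Real.exp (-x ^ 2 / (2 * (π ^ 2 * (ΩSR₁ * FSR₁ ^ 2 + ΩR₂D * FR₂D ^ 2)))) /
          Real.sqrt (2 * π * (π ^ 2 * (ΩSR₁ * FSR₁ ^ 2 + ΩR₂D * FR₂D ^ 2)))) +
      (ΩR₂D * ΩSR₁ / ((ΩSR₁ + ΩR₁D) * (ΩSR₂ + ΩR₂D))) *
        (Real.exp (-x ^ 2 / (2 * (π ^ 2 * (ΩSR₂ * FSR₂ ^ 2 + ΩR₁D * FR₁D ^ 2)))) /
          Real.sqrt (2 * π * (π ^ 2 * (ΩSR₂ * FSR₂ ^ 2 + ΩR₁D * FR₁D ^ 2)))) +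
      (ΩR₁D * ΩR₂D / ((ΩSR₁ + ΩR₁D) * (ΩSR₂ + ΩR₂D))) *
        (Real.exp (-x ^ 2 / (2 * (π ^ 2 * (ΩSR₁ * FSR₁ ^ 2 + ΩSR₂ * FSR₂ ^ 2)))) /
          Real.sqrt (2 * π * (π ^ 2 * (ΩSR₁ * FSR₁ ^ 2 + ΩSR₂ * FSR₂ ^ 2))))) :
    2 * (∫ x in Set.Ioi (0 : ℝ), fa₁ x * fa₂ x) * (∫ x in Set.Ioi (0 : ℝ), x * h x) =
      (π * Real.sqrt (2 * Ω₁ * Ω₂) /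
          ((Ω₁ + Ω₂) ^ ((3 : ℝ) / 2) * ((ΩSR₁ + ΩR₁D) * (ΩSR₂ + ΩR₂D)))) *
        (ΩSR₁ * ΩSR₂ * Real.sqrt (ΩR₁D * FR₁D ^ 2 + ΩR₂D * FR₂D ^ 2) +
          ΩR₁D * ΩSR₂ * Real.sqrt (ΩSR₁ * FSR₁ ^ 2 + ΩR₂D * FR₂D ^ 2) +
          ΩR₂D * ΩSR₁ * Real.sqrt (ΩSR₂ * FSR₂ ^ 2 + ΩR₁D * FR₁D ^ 2) +
          ΩR₁D * ΩR₂D * Real.sqrt (ΩSR₁ * FSR₁ ^ 2 + ΩSR₂ * FSR₂ ^ 2)) := by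
  have hΩ₁pos : 0 < Ω₁ := by rw [hΩ₁]; positivity
  have hΩ₂pos : 0 < Ω₂ := by rw [hΩ₂]; positivity
  set D := (ΩSR₁ + ΩR₁D) * (ΩSR₂ + ΩR₂D)
  set ω : Fin 4 → ℝ := ![ΩSR₁ * ΩSR₂, ΩR₁D * ΩSR₂, ΩR₂D * ΩSR₁, ΩR₁D * ΩR₂D]
  set S : Fin 4 → ℝ := ![ΩR₁D * FR₁D ^ 2 + ΩR₂D * FR₂D ^ 2, ΩSR₁ * FSR₁ ^ 2 + ΩR₂D * FR₂D ^ 2,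
    ΩSR₂ * FSR₂ ^ 2 + ΩR₁D * FR₁D ^ 2, ΩSR₁ * FSR₁ ^ 2 + ΩSR₂ * FSR₂ ^ 2]
  have hh' : h = fun x ↦ ∑ i, ω i / D * gaussianPDFReal 0 (π ^ 2 * S i).toNNReal x := by
    rw [hh]
    ext x
    simp only [Fin.sum_univ_four, gaussianPDFReal_zero_toNNReal,
      Matrix.cons_val_zero, Matrix.cons_val_one, Matrix.cons_val, ω, S]
  have hmoment : ∑ i, ω i / D * √((π ^ 2 * S i).toNNReal : ℝ) = π / D *
      (ΩSR₁ * ΩSR₂ * √(ΩR₁D * FR₁D ^ 2 + ΩR₂D * FR₂D ^ 2) +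
        ΩR₁D * ΩSR₂ * √(ΩSR₁ * FSR₁ ^ 2 + ΩR₂D * FR₂D ^ 2) +
        ΩR₂D * ΩSR₁ * √(ΩSR₂ * FSR₂ ^ 2 + ΩR₁D * FR₁D ^ 2) +
        ΩR₁D * ΩR₂D * √(ΩSR₁ * FSR₁ ^ 2 + ΩSR₂ * FSR₂ ^ 2)) := by
    simp only [Fin.sum_univ_four, sqrt_coe_toNNReal, sqrt_mul (sq_nonneg π), sqrt_sq pi_pos.le,
      Matrix.cons_val_zero, Matrix.cons_val_one, Matrix.cons_val, ω, S]
    ring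
  rw [hfa₁, hfa₂, ← rayleighPDF_mul_div_add, ← rayleighPDF_mul_div_add, ← hΩ₁, ← hΩ₂, hh',
    integral_Ioi_rayleighPDF_mul_rayleighPDF hΩ₁pos hΩ₂pos,
    integral_Ioi_mul_sum_gaussianPDFReal_zero, hmoment, mul_assoc 2 Ω₁,
    sqrt_mul zero_le_two, sqrt_mul zero_le_two]
  have hD : D ≠ 0 := by positivity
  have hU : (Ω₁ + Ω₂) ^ (3 / 2 : ℝ) ≠ 0 := by positivity
  field_simp
  rw [sq_sqrt zero_le_two]
  ring

/-- Theorem 1 of the paper (eq. (7)): the relay switching rate of two-relay opportunistic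
relaying over i.n.i.d. Rayleigh fading, `SR_OR = 2 f_Z(0) ∫₀^∞ ż f_{Ż}(ż) dż`, in closed
form. Here `fa₁, fa₂` are the Rayleigh densities of the min-equivalent virtual channel
gains and `h` is the four-component Gaussian-mixture density of `Ż`. -/
theorem relay_switching_rate_OR_two_relays
    (ΩSR₁ ΩR₁D ΩSR₂ ΩR₂D FSR₁ FR₁D FSR₂ FR₂D : ℝ)
    (hΩSR₁ : 0 < ΩSR₁) (hΩR₁D : 0 < ΩR₁D) (hΩSR₂ : 0 < ΩSR₂) (hΩR₂D : 0 < ΩR₂D)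
    (hFSR₁ : 0 < FSR₁) (hFR₁D : 0 < FR₁D) (hFSR₂ : 0 < FSR₂) (hFR₂D : 0 < FR₂D)
    (Ω₁ Ω₂ : ℝ)
    (hΩ₁ : Ω₁ = ΩSR₁ * ΩR₁D / (ΩSR₁ + ΩR₁D))
    (hΩ₂ : Ω₂ = ΩSR₂ * ΩR₂D / (ΩSR₂ + ΩR₂D))
    (fa₁ fa₂ h : ℝ → ℝ)
    (hfa₁ : fa₁ = fun x => 2 * x * ((ΩSR₁ + ΩR₁D) / (ΩSR₁ * ΩR₁D)) *
      Real.exp (-x ^ 2 * (ΩSR₁ + ΩR₁D) / (ΩSR₁ * ΩR₁D)))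
    (hfa₂ : fa₂ = fun x => 2 * x * ((ΩSR₂ + ΩR₂D) / (ΩSR₂ * ΩR₂D)) *
      Real.exp (-x ^ 2 * (ΩSR₂ + ΩR₂D) / (ΩSR₂ * ΩR₂D)))
    (hh : h = fun x =>
      (ΩSR₁ * ΩSR₂ / ((ΩSR₁ + ΩR₁D) * (ΩSR₂ + ΩR₂D))) *
        (Real.exp (-x ^ 2 / (2 * (π ^ 2 * (ΩR₁D * FR₁D ^ 2 + ΩR₂D * FR₂D ^ 2)))) /
          Real.sqrt (2 * π * (π ^ 2 * (ΩR₁D * FR₁D ^ 2 + ΩR₂D * FR₂D ^ 2)))) +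
      (ΩR₁D * ΩSR₂ / ((ΩSR₁ + ΩR₁D) * (ΩSR₂ + ΩR₂D))) *
        (Real.exp (-x ^ 2 / (2 * (π ^ 2 * (ΩSR₁ * FSR₁ ^ 2 + ΩR₂D * FR₂D ^ 2)))) /
          Real.sqrt (2 * π * (π ^ 2 * (ΩSR₁ * FSR₁ ^ 2 + ΩR₂D * FR₂D ^ 2)))) +
      (ΩR₂D * ΩSR₁ / ((ΩSR₁ + ΩR₁D) * (ΩSR₂ + ΩR₂D))) *
        (Real.exp (-x ^ 2 / (2 * (π ^ 2 * (ΩSR₂ * FSR₂ ^ 2 + ΩR₁D * FR₁D ^ 2)))) /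
          Real.sqrt (2 * π * (π ^ 2 * (ΩSR₂ * FSR₂ ^ 2 + ΩR₁D * FR₁D ^ 2)))) +
      (ΩR₁D * ΩR₂D / ((ΩSR₁ + ΩR₁D) * (ΩSR₂ + ΩR₂D))) *
        (Real.exp (-x ^ 2 / (2 * (π ^ 2 * (ΩSR₁ * FSR₁ ^ 2 + ΩSR₂ * FSR₂ ^ 2)))) /
          Real.sqrt (2 * π * (π ^ 2 * (ΩSR₁ * FSR₁ ^ 2 + ΩSR₂ * FSR₂ ^ 2))))) :
    2 * (∫ x in Set.Ioi (0 : ℝ), fa₁ x * fa₂ x) * (∫ x in Set.Ioi (0 : ℝ), x * h x) =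
      (π * Real.sqrt (2 * Ω₁ * Ω₂) /
          ((Ω₁ + Ω₂) ^ ((3 : ℝ) / 2) * ((ΩSR₁ + ΩR₁D) * (ΩSR₂ + ΩR₂D)))) *
        (ΩSR₁ * ΩSR₂ * Real.sqrt (ΩR₁D * FR₁D ^ 2 + ΩR₂D * FR₂D ^ 2) +
          ΩR₁D * ΩSR₂ * Real.sqrt (ΩSR₁ * FSR₁ ^ 2 + ΩR₂D * FR₂D ^ 2) +
          ΩR₂D * ΩSR₁ * Real.sqrt (ΩSR₂ * FSR₂ ^ 2 + ΩR₁D * FR₁D ^ 2) +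
          ΩR₁D * ΩR₂D * Real.sqrt (ΩSR₁ * FSR₁ ^ 2 + ΩSR₂ * FSR₂ ^ 2)) :=
  relay_switching_rate_OR_two_relays_general ΩSR₁ ΩR₁D ΩSR₂ ΩR₂D FSR₁ FR₁D FSR₂ FR₂D hΩSR₁ hΩR₁D
    hΩSR₂ hΩR₂D Ω₁ Ω₂ hΩ₁ hΩ₂ fa₁ fa₂ h hfa₁ hfa₂ hh
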